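/- Let i ≥ 1 and let G_i be as above. Then the number of connected convex sets of G_i is at most 2·3^i + 3i + 1, while the number of convex sets of G_i is at least 4^i − 1. Consequently, the ratio cc(G_i)/co(G_i) tends to 0 as i → ∞. -/

import Mathlib

/-!
Digraphs are given by an arc relation `A : V → V → Prop` on a vertex type `V`.
A directed path from `a` to `b` is encoded as `a :: (l ++ [b])` where the list
satisfies `List.Chain A` (consecutive arcs) and `List.Nodup` (distinct vertices);
`l` is the list of internal vertices.
-/

variable {V : Type*}

/-- A non-empty vertex set `X` is convex if no directed path between two
vertices of `X` contains a vertex not in `X`. -/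
def ConvexIn (A : V → V → Prop) (X : Set V) : Prop :=
  X.Nonempty ∧ ∀ a b : V, ∀ l : List V, a ∈ X → b ∈ X →
    List.Chain A a (l ++ [b]) → (a :: (l ++ [b])).Nodup → ∀ w ∈ l, w ∈ X

/-- A vertex set is connected if the underlying undirected graph induced on it
is connected. -/
def ConnectedIn (A : V → V → Prop) (X : Set V) : Prop :=
  ((SimpleGraph.fromRel A).induce X).Connected

/-- A digraph is acyclic if it has no directed cycle, equivalently no
nontrivial directed closed walk. -/
def AcyclicDigraph (A : V → V → Prop) : Prop :=
  ∀ v, ¬ Relation.TransGen A v v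

/-- A digraph is connected if its underlying undirected graph is connected. -/
def DigraphConnected (A : V → V → Prop) : Prop :=
  (SimpleGraph.fromRel A).Connected

/-- A source is a vertex with in-degree zero. -/
def IsSourceIn (A : V → V → Prop) (v : V) : Prop := ∀ u, ¬ A u v

/-- A sink is a vertex with out-degree zero. -/
def IsSinkIn (A : V → V → Prop) (v : V) : Prop := ∀ u, ¬ A v u

/-- A cut-vertex of a connected digraph: deleting it disconnects the
underlying undirected graph. -/
def IsCutVertexIn (A : V → V → Prop) (v : V) : Prop :=
  ¬ ((SimpleGraph.fromRel A).induce {u | u ≠ v}).Connected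

/-- Vertices of the digraph `G_i`: a source `s`, a sink `t`, and internal
vertices `a j`, `b j` on the `j`-th path, for `j : Fin i`. -/
inductive GV (i : ℕ) : Type
  | s : GV i
  | t : GV i
  | a : Fin i → GV i
  | b : Fin i → GV i
deriving DecidableEq

/-- Arcs of `G_i`: `s → a j`, `a j → b j`, `b j → t` for each `j`. -/
def GAdj {i : ℕ} : GV i → GV i → Prop
  | GV.s, GV.a _ => True
  | GV.a j, GV.b k => j = k
  | GV.b _, GV.t => True
  | _, _ => False

/-!
Every arc of `G_i` raises the level `s ↦ 0, aⱼ ↦ 1, bⱼ ↦ 2, t ↦ 3` by one, so the only directed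
paths with an inner vertex start at `s` or end at `t`. Hence every non-empty set avoiding `s` and
`t` is convex, which gives `2^(2i) - 1 = 4^i - 1` convex sets. A connected convex set `X`, on the
other hand, is one of: the whole vertex set (if `s, t ∈ X`, by the paths `s aⱼ bⱼ t`); `s` together
with, on each path `j`, one of `∅, {aⱼ}, {aⱼ, bⱼ}` (if only `s ∈ X`, by the paths `s aⱼ bⱼ`);
the mirror image of this for `t`; or a non-empty subset of a single path `{aⱼ, bⱼ}` (if
`s, t ∉ X`, since then the induced graph has no arc between different paths): at most
`1 + 2·3^i + 3i` sets.
-/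

open Filter Topology

theorem SimpleGraph.Preconnected.apply_eq_of_adj {W β : Type*} {G : SimpleGraph W}
    (hG : G.Preconnected) {f : W → β} (hf : ∀ u v, G.Adj u v → f u = f v) (u v : W) :
    f u = f v := by
  obtain ⟨p⟩ := hG u v
  induction p with
  | nil => rfl
  | cons h _ ih => exact (hf _ _ h).trans ih

theorem List.IsChain.apply_eq_add_length {α : Type*} {R : α → α → Prop} {f : α → ℕ}
    (hf : ∀ x y, R x y → f y = f x + 1) {x y : α} {l : List α}
    (h : List.IsChain R (x :: (l ++ [y]))) : f y = f x + l.length + 1 := by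
  induction l generalizing x with
  | nil => exact hf x y (by simpa using h)
  | cons z l ih =>
    simp only [List.cons_append, List.isChain_cons_cons] at h
    rw [ih h.2, hf x z h.1, List.length_cons]
    ring

theorem Set.ncard_range_le {α β : Type*} [Finite α] (f : α → β) :
    (Set.range f).ncard ≤ Nat.card α :=
  Finite.card_range_le f

namespace GV

variable {i : ℕ}

instance : Finite (GV i) := by
  refine Finite.of_surjective (fun x : Option (Option (Fin i ⊕ Fin i)) =>
    x.elim s (Option.elim · t (Sum.elim a b))) ?_
  rintro (_ | _ | j | j)
  exacts [⟨none, rfl⟩, ⟨some none, rfl⟩, ⟨some (some (.inl j)), rfl⟩,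
    ⟨some (some (.inr j)), rfl⟩]

def level : GV i → ℕ
  | s => 0
  | a _ => 1
  | b _ => 2
  | t => 3

theorem level_eq_of_gAdj {u v : GV i} (h : GAdj u v) : v.level = u.level + 1 := by
  cases u <;> cases v <;> simp_all [GAdj, level]

def index : GV i → Option (Fin i)
  | a j => some j
  | b j => some j
  | _ => none

theorem index_eq_of_gAdj {u v : GV i} (h : GAdj u v) (hu : u ≠ s) (hv : v ≠ t) :
    u.index = v.index := by
  cases u <;> cases v <;> simp_all [GAdj, index]

theorem convexIn_of_notMem {X : Set (GV i)} (hne : X.Nonempty) (hs : s ∉ X) (ht : t ∉ X) :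
    ConvexIn GAdj X := by
  refine ⟨hne, fun u v l hu hv hl _ w hw => ?_⟩
  have hlevel := List.IsChain.apply_eq_add_length (fun _ _ h => level_eq_of_gAdj h) hl
  have hu₁ : 1 ≤ u.level := by cases u <;> simp_all [level]
  have hv₂ : v.level ≤ 2 := by cases v <;> simp_all [level]
  have : l.length = 0 := by omega
  simp_all

section ConvexIn

variable {X : Set (GV i)} (hX : ConvexIn GAdj X)
include hX

theorem a_mem_of_convexIn {j : Fin i} (hs : s ∈ X) (hb : b j ∈ X) : a j ∈ X :=
  hX.2 s (b j) [a j] hs hb (.cons_cons trivial (.cons_cons rfl (.singleton _))) (by simp) _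
    (by simp)

theorem b_mem_of_convexIn {j : Fin i} (ha : a j ∈ X) (ht : t ∈ X) : b j ∈ X :=
  hX.2 (a j) t [b j] ha ht (.cons_cons rfl (.cons_cons trivial (.singleton _))) (by simp) _
    (by simp)

theorem eq_univ_of_convexIn (hs : s ∈ X) (ht : t ∈ X) : X = Set.univ := by
  have hpath (j : Fin i) := hX.2 s t [a j, b j] hs ht
    (.cons_cons trivial (.cons_cons rfl (.cons_cons trivial (.singleton _)))) (by simp)
  refine Set.eq_univ_of_forall fun v => ?_
  cases v with
  | s => exact hs
  | t => exact ht
  | a j => exact hpath j _ (by simp)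
  | b j => exact hpath j _ (by simp)

end ConvexIn

def sourceSet (f : Fin i → Fin 3) : Set (GV i) :=
  {v | match v with
    | s => True
    | t => False
    | a j => f j ≠ 0
    | b j => f j = 2}

def sinkSet (f : Fin i → Fin 3) : Set (GV i) :=
  {v | match v with
    | s => False
    | t => True
    | a j => f j = 2
    | b j => f j ≠ 0}

def pathSet (j : Fin i) : Fin 3 → Set (GV i) :=
  ![{a j}, {b j}, {a j, b j}]

theorem mem_range_sourceSet_of_convexIn {X : Set (GV i)} (hX : ConvexIn GAdj X) (hs : s ∈ X)
    (ht : t ∉ X) : X ∈ Set.range sourceSet := by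
  classical
  refine ⟨fun j => if b j ∈ X then 2 else if a j ∈ X then 1 else 0, ?_⟩
  ext (_ | _ | j | j)
  · simpa [sourceSet] using hs
  · simpa [sourceSet] using ht
  · have := a_mem_of_convexIn hX hs (j := j)
    simp only [sourceSet, Set.mem_ofPred_eq]
    split_ifs <;> simp_all
  · simp only [sourceSet, Set.mem_ofPred_eq]
    split_ifs <;> simp_all

theorem mem_range_sinkSet_of_convexIn {X : Set (GV i)} (hX : ConvexIn GAdj X) (hs : s ∉ X)
    (ht : t ∈ X) : X ∈ Set.range sinkSet := by
  classical
  refine ⟨fun j => if a j ∈ X then 2 else if b j ∈ X then 1 else 0, ?_⟩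
  ext (_ | _ | j | j)
  · simpa [sinkSet] using hs
  · simpa [sinkSet] using ht
  · simp only [sinkSet, Set.mem_ofPred_eq]
    split_ifs <;> simp_all
  · have := (b_mem_of_convexIn hX (j := j) · ht)
    simp only [sinkSet, Set.mem_ofPred_eq]
    split_ifs <;> simp_all

theorem mem_range_pathSet_of_connectedIn {X : Set (GV i)} (hX : ConnectedIn GAdj X)
    (hs : s ∉ X) (ht : t ∉ X) : X ∈ Set.range (Function.uncurry pathSet) := by
  obtain ⟨⟨x, hx⟩⟩ := hX.nonempty
  have hindex (v) (hv : v ∈ X) : v.index = x.index := by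
    refine hX.preconnected.apply_eq_of_adj (f := fun v : X => v.1.index) ?_ ⟨v, hv⟩ ⟨x, hx⟩
    rintro ⟨u, hu⟩ ⟨w, hw⟩ ⟨-, huw | hwu⟩
    · exact index_eq_of_gAdj huw (ne_of_mem_of_not_mem hu hs) (ne_of_mem_of_not_mem hw ht)
    · exact (index_eq_of_gAdj hwu (ne_of_mem_of_not_mem hw hs) (ne_of_mem_of_not_mem hu ht)).symm
  obtain ⟨j, hj⟩ : ∃ j, x.index = some j := by
    cases x <;> simp_all [index]
  have hsub : X ⊆ {a j, b j} := fun v hv => by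
    have := hindex v hv
    cases v <;> simp_all [index]
  rcases Set.subset_pair_iff_eq.1 hsub with h | h | h | h
  · exact absurd h (Set.nonempty_of_mem hx).ne_empty
  · exact ⟨(j, 0), h.symm⟩
  · exact ⟨(j, 1), h.symm⟩
  · exact ⟨(j, 2), h.symm⟩

theorem ncard_connectedIn_convexIn_le (i : ℕ) :
    {X : Set (GV i) | ConnectedIn GAdj X ∧ ConvexIn GAdj X}.ncard ≤ 2 * 3 ^ i + 3 * i + 1 := by
  have hsub : {X : Set (GV i) | ConnectedIn GAdj X ∧ ConvexIn GAdj X} ⊆ Set.range sourceSet ∪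
      Set.range sinkSet ∪ Set.range (Function.uncurry pathSet) ∪ {Set.univ} := by
    rintro X ⟨hconn, hconv⟩
    by_cases hs : s ∈ X <;> by_cases ht : t ∈ X
    · exact .inr (eq_univ_of_convexIn hconv hs ht)
    · exact .inl (.inl (.inl (mem_range_sourceSet_of_convexIn hconv hs ht)))
    · exact .inl (.inl (.inr (mem_range_sinkSet_of_convexIn hconv hs ht)))
    · exact .inl (.inr (mem_range_pathSet_of_connectedIn hconn hs ht))
  calc _ ≤ _ := Set.ncard_le_ncard hsub
    _ ≤ (Set.range sourceSet).ncard + (Set.range sinkSet).ncard +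
        (Set.range (Function.uncurry pathSet)).ncard + ({Set.univ} : Set (Set (GV i))).ncard := by
      grw [Set.ncard_union_le, Set.ncard_union_le, Set.ncard_union_le]
    _ ≤ 3 ^ i + 3 ^ i + i * 3 + 1 := by
      gcongr
      · simpa using Set.ncard_range_le (sourceSet (i := i))
      · simpa using Set.ncard_range_le (sinkSet (i := i))
      · simpa using Set.ncard_range_le (Function.uncurry (pathSet (i := i)))
      · simp
    _ = 2 * 3 ^ i + 3 * i + 1 := by ring

def internal : Set (GV i) := Set.range (Sum.elim a b)

theorem ncard_internal : (internal : Set (GV i)).ncard = 2 * i := by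
  rw [internal, Set.ncard_range_of_injective]
  · simp [two_mul]
  · exact Function.Injective.sumElim (fun _ _ => a.inj) (fun _ _ => b.inj) fun _ _ => nofun

theorem four_pow_sub_one_le_ncard_convexIn (i : ℕ) :
    4 ^ i - 1 ≤ {X : Set (GV i) | ConvexIn GAdj X}.ncard := by
  have hsub : 𝒫 internal \ {∅} ⊆ {X : Set (GV i) | ConvexIn GAdj X} := by
    rintro X ⟨hX, hne⟩
    refine convexIn_of_notMem (Set.nonempty_iff_ne_empty.2 hne) (fun h => ?_) (fun h => ?_)
    · simpa [internal] using hX h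
    · simpa [internal] using hX h
  calc 4 ^ i - 1 = (𝒫 internal \ {∅} : Set (Set (GV i))).ncard := by
        rw [Set.ncard_sdiff_singleton_of_mem (Set.empty_subset _), Set.ncard_powerset,
          ncard_internal, pow_mul]
        norm_num
    _ ≤ _ := Set.ncard_le_ncard hsub

end GV

theorem tendsto_div_atTop_zero_of_le {c d : ℕ → ℕ} (hc : ∀ i, c i ≤ 2 * 3 ^ i + 3 * i + 1)
    (hd : ∀ i, 4 ^ i - 1 ≤ d i) : Tendsto (fun i => (c i : ℝ) / d i) atTop (𝓝 0) := by
  have hbound : ∀ᶠ i in atTop, (c i : ℝ) / d i ≤ 12 * (3 / 4) ^ i := by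
    filter_upwards [eventually_ge_atTop 1] with i hi
    have hc' : (c i : ℝ) ≤ 6 * 3 ^ i := by
      have := Nat.lt_pow_self (n := i) (by norm_num : 1 < 3)
      exact_mod_cast (hc i).trans (by omega)
    have hd' : (4 : ℝ) ^ i ≤ 2 * d i := by
      have := Nat.pow_le_pow_right (by norm_num : 0 < 4) hi
      exact_mod_cast (by have := hd i; omega : 4 ^ i ≤ 2 * d i)
    calc (c i : ℝ) / d i ≤ 6 * 3 ^ i / (4 ^ i / 2) :=
          div_le_div₀ (by positivity) hc' (by positivity) (by linarith)
      _ = 12 * (3 / 4) ^ i := by rw [div_pow]; field_simp; ring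
  refine squeeze_zero' (.of_forall fun i => by positivity) hbound ?_
  simpa using (tendsto_pow_atTop_nhds_zero_of_lt_one (by norm_num)
    (by norm_num : (3 / 4 : ℝ) < 1)).const_mul 12

open Filter in
/-- `G_i` has at most `2·3^i + 3i + 1` connected convex sets and at least
`4^i - 1` convex sets, so the ratio `cc(G_i)/co(G_i)` tends to `0`. -/
theorem stmt_13 :
    (∀ i : ℕ, 1 ≤ i →
      {X : Set (GV i) | ConnectedIn GAdj X ∧ ConvexIn GAdj X}.ncard ≤
        2 * 3 ^ i + 3 * i + 1) ∧
    (∀ i : ℕ, 1 ≤ i →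
      4 ^ i - 1 ≤ {X : Set (GV i) | ConvexIn GAdj X}.ncard) ∧
    Tendsto (fun i : ℕ =>
        ({X : Set (GV i) | ConnectedIn GAdj X ∧ ConvexIn GAdj X}.ncard : ℝ) /
          ({X : Set (GV i) | ConvexIn GAdj X}.ncard : ℝ))
      atTop (nhds 0) :=
  ⟨fun i _ => GV.ncard_connectedIn_convexIn_le i,
    fun i _ => GV.four_pow_sub_one_le_ncard_convexIn i,
    tendsto_div_atTop_zero_of_le GV.ncard_connectedIn_convexIn_le
      GV.four_pow_sub_one_le_ncard_convexIn⟩
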